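/- arXiv:1808.04026 — 3 statements merged into one kernel-verified Lean document; each statement's English description precedes it below -/
import Mathlib

section
/- Let $a, b \in \mathbb{R}^d$ with $d \ge 1$ and $\beta \in [0,1]$. If $\langle b \rangle \ge \beta \langle a - b \rangle$, then $\langle a \rangle^{1/2} \le \langle b \rangle^{1/2} + (1 - \sqrt{\beta}/2)\, \langle a - b \rangle^{1/2}$. -/
/-!
Write `A = ⟨a⟩`, `B = ⟨b⟩`, `C = ⟨a - b⟩`, so that `A ≤ B + C` and `β C ≤ B`. Squaring, it suffices that
`C ≤ (2 - √β) √B √C + (1 - √β/2)² C`, and `√B ≥ √β √C` reduces this to `√β (1 - 3√β/4) C ≥ 0`.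
-/

open Real

lemma sqrt_one_add_sq_norm_le {E : Type*} [SeminormedAddCommGroup E] (a b : E) :
    √(1 + ‖a‖ ^ 2) ≤ √(1 + ‖b‖ ^ 2) + √(1 + ‖a - b‖ ^ 2) := by
  have hb : ‖b‖ ≤ √(1 + ‖b‖ ^ 2) := le_sqrt_of_sq_le (by linarith)
  have hab : ‖a - b‖ ≤ √(1 + ‖a - b‖ ^ 2) := le_sqrt_of_sq_le (by linarith)
  have htri : ‖a‖ ≤ ‖b‖ + ‖a - b‖ := by simpa using norm_add_le b (a - b)
  rw [sqrt_le_left (by positivity)]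
  nlinarith [sq_sqrt (show (0 : ℝ) ≤ 1 + ‖b‖ ^ 2 by positivity),
    sq_sqrt (show (0 : ℝ) ≤ 1 + ‖a - b‖ ^ 2 by positivity),
    mul_le_mul hb hab (norm_nonneg _) (sqrt_nonneg _),
    mul_nonneg (norm_nonneg b) (norm_nonneg (a - b)), norm_nonneg a]

lemma sqrt_le_sqrt_add_of_le_add {x y z β : ℝ} (hy : 0 ≤ y) (hz : 0 ≤ z) (hβ : β ∈ Set.Icc 0 1)
    (hxyz : x ≤ y + z) (hβzy : β * z ≤ y) :
    √x ≤ √y + (1 - √β / 2) * √z := by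
  obtain ⟨hβ0, hβ1⟩ := hβ
  have ht1 : √β ≤ 1 := sqrt_le_one.mpr hβ1
  have htw : √β * √z ≤ √y := by
    rw [← sqrt_mul hβ0]
    exact sqrt_le_sqrt hβzy
  rw [sqrt_le_left (by nlinarith [sqrt_nonneg y, sqrt_nonneg z])]
  have hcross : (2 - √β) * (√β * √z * √z) ≤ (2 - √β) * (√y * √z) :=
    mul_le_mul_of_nonneg_left (mul_le_mul_of_nonneg_right htw (sqrt_nonneg z)) (by linarith)
  nlinarith [sq_sqrt hy, sq_sqrt hz, sqrt_nonneg β,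
    mul_nonneg (mul_nonneg (sqrt_nonneg β) (sub_nonneg.mpr ht1)) (sq_nonneg √z)]

theorem stmt_2_general (d : ℕ) (a b : EuclideanSpace ℝ (Fin d)) (β : ℝ)
    (hβ : β ∈ Set.Icc (0:ℝ) 1)
    (h : Real.sqrt (1 + ‖b‖ ^ 2) ≥ β * Real.sqrt (1 + ‖a - b‖ ^ 2)) :
    Real.sqrt (Real.sqrt (1 + ‖a‖ ^ 2)) ≤
      Real.sqrt (Real.sqrt (1 + ‖b‖ ^ 2)) +
        (1 - Real.sqrt β / 2) * Real.sqrt (Real.sqrt (1 + ‖a - b‖ ^ 2)) :=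
  sqrt_le_sqrt_add_of_le_add (sqrt_nonneg _) (sqrt_nonneg _) hβ (sqrt_one_add_sq_norm_le a b) h

theorem stmt_2 (d : ℕ) (hd : 1 ≤ d) (a b : EuclideanSpace ℝ (Fin d)) (β : ℝ)
    (hβ : β ∈ Set.Icc (0:ℝ) 1)
    (h : Real.sqrt (1 + ‖b‖ ^ 2) ≥ β * Real.sqrt (1 + ‖a - b‖ ^ 2)) :
    Real.sqrt (Real.sqrt (1 + ‖a‖ ^ 2)) ≤
      Real.sqrt (Real.sqrt (1 + ‖b‖ ^ 2)) +
        (1 - Real.sqrt β / 2) * Real.sqrt (Real.sqrt (1 + ‖a - b‖ ^ 2)) :=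
  stmt_2_general d a b β hβ h
end

section
/- Fix $s \in (0,1)$, $\rho > 0$, and $g$ as follows: $g(r) = \int_0^r g'(x)dx$ with $g'(r) = s r^{s-1} - s \rho^{s-1}$ for $r \in (0,\rho]$, $g'(r)=0$ for $r \ge \rho$. Let $f_\lambda(r) = e^{\lambda g(r)}$ for $\lambda \in [0,1]$. Then for $y \ge 1$ and $x \in [0,y]$: $|f_\lambda(y+x) - f_\lambda(y)| \le f_\lambda(x) f_\lambda(y)\, \lambda\, g(y)\, (x/y)$. -/
/-! The density `g'` is nonnegative and decreasing on `(0, ∞)`, so its primitive `g` is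
nondecreasing and subadditive, and `d := g (y + x) - g y` satisfies
`d ≤ x g'(y) ≤ (x / y) g(y)`, the last step being the concavity bound `y g'(y) ≤ g(y)`.
Then `f_λ(y + x) - f_λ(y) = f_λ(y) (e^{λd} - 1) ≤ f_λ(y) λ d e^{λd}`, and
`e^{λd} ≤ f_λ(x)` by subadditivity. -/

open MeasureTheory Set Real

section Antitone

variable {φ : ℝ → ℝ} {x y : ℝ}

theorem integral_le_mul_of_antitoneOn (hφ : AntitoneOn φ (Ioi 0))
    (hint : IntervalIntegrable φ volume y (y + x)) (hy : 0 < y) (hx : 0 ≤ x) :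
    ∫ t in y..y + x, φ t ≤ x * φ y := by
  calc ∫ t in y..y + x, φ t ≤ ∫ _ in y..y + x, φ y :=
        intervalIntegral.integral_mono_on (by linarith) hint intervalIntegrable_const
          fun t ht => hφ hy (hy.trans_le ht.1) ht.1
    _ = x * φ y := by simp

theorem mul_le_integral_of_antitoneOn (hφ : AntitoneOn φ (Ioi 0))
    (hint : IntervalIntegrable φ volume 0 y) (hy : 0 ≤ y) :
    y * φ y ≤ ∫ t in 0..y, φ t := by
  calc y * φ y = ∫ _ in 0..y, φ y := by simp
    _ ≤ ∫ t in 0..y, φ t :=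
        intervalIntegral.integral_mono_on_of_le_Ioo hy intervalIntegrable_const hint
          fun t ht => hφ ht.1 (ht.1.trans ht.2) ht.2.le

theorem integral_add_le_integral_of_antitoneOn (hφ : AntitoneOn φ (Ioi 0))
    (hint : ∀ a b, IntervalIntegrable φ volume a b) (hy : 0 ≤ y) (hx : 0 ≤ x) :
    ∫ t in y..y + x, φ t ≤ ∫ t in 0..x, φ t := by
  have hshift : ∫ t in y..y + x, φ t = ∫ t in 0..x, φ (t + y) := by
    rw [intervalIntegral.integral_comp_add_right, zero_add, add_comm x]
  rw [hshift]
  refine intervalIntegral.integral_mono_on_of_le_Ioo hx ?_ (hint 0 x)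
    fun t ht => hφ ht.1 (by simp only [mem_Ioi]; linarith [ht.1]) (by linarith)
  simpa using (hint y (y + x)).comp_add_right y

theorem integral_le_integral_add_of_nonneg (hφ0 : ∀ t, 0 < t → 0 ≤ φ t)
    (hint : ∀ a b, IntervalIntegrable φ volume a b) (hy : 0 < y) (hx : 0 ≤ x) :
    ∫ t in 0..y, φ t ≤ ∫ t in 0..y + x, φ t := by
  rw [← sub_nonneg, intervalIntegral.integral_interval_sub_left (hint 0 _) (hint 0 _)]
  exact intervalIntegral.integral_nonneg (by linarith) fun t ht => hφ0 t (hy.trans_le ht.1)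

theorem integral_add_le_add_integral_of_antitoneOn (hφ : AntitoneOn φ (Ioi 0))
    (hint : ∀ a b, IntervalIntegrable φ volume a b) (hy : 0 ≤ y) (hx : 0 ≤ x) :
    ∫ t in 0..y + x, φ t ≤ (∫ t in 0..y, φ t) + ∫ t in 0..x, φ t := by
  have hdiff := integral_add_le_integral_of_antitoneOn hφ hint hy hx
  rw [← intervalIntegral.integral_interval_sub_left (hint 0 (y + x)) (hint 0 y)] at hdiff
  linarith

theorem integral_add_sub_integral_le_mul_div_of_antitoneOn (hφ : AntitoneOn φ (Ioi 0))
    (hint : ∀ a b, IntervalIntegrable φ volume a b) (hy : 0 < y) (hx : 0 ≤ x) :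
    (∫ t in 0..y + x, φ t) - ∫ t in 0..y, φ t ≤ (∫ t in 0..y, φ t) * (x / y) := by
  rw [intervalIntegral.integral_interval_sub_left (hint 0 _) (hint 0 _), mul_div, le_div_iff₀ hy]
  have hupper := integral_le_mul_of_antitoneOn hφ (hint y (y + x)) hy hx
  have hlower := mul_le_integral_of_antitoneOn hφ (hint 0 y) hy.le
  nlinarith

end Antitone

theorem exp_sub_one_le_mul_exp (t : ℝ) : exp t - 1 ≤ t * exp t := by
  have h := mul_le_mul_of_nonneg_right (add_one_le_exp (-t)) (exp_pos t).le
  rw [← exp_add, neg_add_cancel, exp_zero] at h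
  linarith

theorem abs_exp_mul_add_sub_exp_mul_le {g : ℝ → ℝ} {lam x y : ℝ} (hlam : 0 ≤ lam)
    (hmono : g y ≤ g (y + x)) (hsubadd : g (y + x) ≤ g y + g x)
    (hconc : g (y + x) - g y ≤ g y * (x / y)) :
    |exp (lam * g (y + x)) - exp (lam * g y)| ≤
      exp (lam * g x) * exp (lam * g y) * lam * g y * (x / y) := by
  set d := g (y + x) - g y with hd_def
  have hd : 0 ≤ lam * d := mul_nonneg hlam (sub_nonneg.mpr hmono)
  have hsplit : exp (lam * g (y + x)) = exp (lam * g y) * exp (lam * d) := by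
    rw [← exp_add, hd_def]; ring_nf
  have hexp : exp (lam * d) ≤ exp (lam * g x) :=
    exp_le_exp.mpr (mul_le_mul_of_nonneg_left (by linarith) hlam)
  have hdlin : lam * d ≤ lam * (g y * (x / y)) := mul_le_mul_of_nonneg_left hconc hlam
  rw [hsplit, abs_of_nonneg (by nlinarith [one_le_exp hd, exp_pos (lam * g y)])]
  calc exp (lam * g y) * exp (lam * d) - exp (lam * g y)
      = exp (lam * g y) * (exp (lam * d) - 1) := by ring
    _ ≤ exp (lam * g y) * (lam * d * exp (lam * d)) := by
        gcongr; exact exp_sub_one_le_mul_exp _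
    _ ≤ exp (lam * g y) * (lam * (g y * (x / y)) * exp (lam * g x)) := by
        gcongr; linarith
    _ = exp (lam * g x) * exp (lam * g y) * lam * g y * (x / y) := by ring

-- The paper's `g'`.
noncomputable def truncRpowDeriv (s ρ t : ℝ) : ℝ :=
  if t ≤ ρ then s * t ^ (s - 1) - s * ρ ^ (s - 1) else 0

section truncRpowDeriv

variable {s ρ : ℝ}

theorem truncRpowDeriv_antitoneOn (hs0 : 0 ≤ s) (hs1 : s ≤ 1) :
    AntitoneOn (truncRpowDeriv s ρ) (Ioi 0) := by
  intro a ha b _ hab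
  have hrpow {u v : ℝ} (hu : 0 < u) (huv : u ≤ v) : s * v ^ (s - 1) ≤ s * u ^ (s - 1) :=
    mul_le_mul_of_nonneg_left (rpow_le_rpow_of_nonpos hu huv (by linarith)) hs0
  unfold truncRpowDeriv
  split_ifs with hbρ haρ haρ
  · linarith [hrpow ha hab]
  · exact absurd (hab.trans hbρ) haρ
  · linarith [hrpow ha haρ]
  · rfl

theorem truncRpowDeriv_nonneg (hs0 : 0 ≤ s) (hs1 : s ≤ 1) {t : ℝ} (ht : 0 < t) :
    0 ≤ truncRpowDeriv s ρ t := by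
  by_cases htρ : t ≤ ρ
  · calc 0 = truncRpowDeriv s ρ ρ := by simp [truncRpowDeriv]
      _ ≤ truncRpowDeriv s ρ t :=
        truncRpowDeriv_antitoneOn hs0 hs1 ht (ht.trans_le htρ) htρ
  · simp [truncRpowDeriv, htρ]

theorem intervalIntegrable_truncRpowDeriv (hs0 : 0 < s) (a b : ℝ) :
    IntervalIntegrable (truncRpowDeriv s ρ) volume a b := by
  have hind : truncRpowDeriv s ρ =
      (Iic ρ).indicator fun t => s * t ^ (s - 1) - s * ρ ^ (s - 1) := by
    ext t; simp [truncRpowDeriv, indicator_apply]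
  have hrpow : IntervalIntegrable (fun t => s * t ^ (s - 1) - s * ρ ^ (s - 1)) volume a b :=
    ((intervalIntegral.intervalIntegrable_rpow' (by linarith)).const_mul s).sub
      intervalIntegrable_const
  rw [hind, intervalIntegrable_iff]
  exact (intervalIntegrable_iff.mp hrpow).indicator measurableSet_Iic

end truncRpowDeriv

theorem stmt_7_general (s ρ lam : ℝ) (hs : s ∈ Set.Ioo (0:ℝ) 1)
    (hlam : lam ∈ Set.Icc (0:ℝ) 1) (g : ℝ → ℝ)
    (hg : ∀ r : ℝ, g r = ∫ x in (0:ℝ)..r,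
      (if x ≤ ρ then s * x ^ (s - 1) - s * ρ ^ (s - 1) else 0)) :
    ∀ x y : ℝ, 1 ≤ y → x ∈ Set.Icc 0 y →
      |Real.exp (lam * g (y + x)) - Real.exp (lam * g y)| ≤
        Real.exp (lam * g x) * Real.exp (lam * g y) * lam * g y * (x / y) := by
  obtain ⟨hs0, hs1⟩ := hs
  have hφ := truncRpowDeriv_antitoneOn (ρ := ρ) hs0.le hs1.le
  have hint := intervalIntegrable_truncRpowDeriv (ρ := ρ) hs0
  obtain rfl : g = fun r => ∫ t in 0..r, truncRpowDeriv s ρ t := funext hg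
  intro x y hy ⟨hx, _⟩
  have hy0 : 0 < y := one_pos.trans_le hy
  exact abs_exp_mul_add_sub_exp_mul_le (g := fun r => ∫ t in 0..r, truncRpowDeriv s ρ t)
    hlam.1
    (integral_le_integral_add_of_nonneg (fun _ => truncRpowDeriv_nonneg hs0.le hs1.le)
      hint hy0 hx)
    (integral_add_le_add_integral_of_antitoneOn hφ hint hy0.le hx)
    (integral_add_sub_integral_le_mul_div_of_antitoneOn hφ hint hy0 hx)

theorem stmt_7 (s ρ lam : ℝ) (hs : s ∈ Set.Ioo (0:ℝ) 1) (hρ : 0 < ρ)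
    (hlam : lam ∈ Set.Icc (0:ℝ) 1) (g : ℝ → ℝ)
    (hg : ∀ r : ℝ, g r = ∫ x in (0:ℝ)..r,
      (if x ≤ ρ then s * x ^ (s - 1) - s * ρ ^ (s - 1) else 0)) :
    ∀ x y : ℝ, 1 ≤ y → x ∈ Set.Icc 0 y →
      |Real.exp (lam * g (y + x)) - Real.exp (lam * g y)| ≤
        Real.exp (lam * g x) * Real.exp (lam * g y) * lam * g y * (x / y) :=
  stmt_7_general s ρ lam hs hlam g hg
end

section
/- Define $L_\kappa(t,\xi) = 1 + \frac{\kappa\langle\xi\rangle}{\langle\xi\rangle^{1/2} + \kappa t}$ for $\kappa \in (0,1]$, $t \ge 0$, $\xi \in \mathbb{R}$. Then $L_\kappa(t,\xi) \ge 1$, $|\partial_\xi L_\kappa(t,\xi)| \lesssim 1$ uniformly in $\kappa, t, \xi$, and $-\frac{\partial_t L_\kappa(t,\xi)}{L_\kappa(t,\xi)} = \frac{\kappa^2\langle\xi\rangle}{(\langle\xi\rangle^{1/2}+\kappa t)(\langle\xi\rangle^{1/2}+\kappa t+\kappa\langle\xi\rangle)} \le \frac{\kappa\langle\xi\rangle}{\langle\xi\rangle^{3/2}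 + \kappa t^2}$. -/
/-- The averaging length `L_κ(t,ξ) = 1 + κ⟨ξ⟩/(⟨ξ⟩^{1/2} + κ t)`, where `⟨ξ⟩ = √(1+ξ²)`. -/
noncomputable def Lkappa (κ t ξ : ℝ) : ℝ :=
  1 + κ * Real.sqrt (1 + ξ ^ 2) / (Real.sqrt (Real.sqrt (1 + ξ ^ 2)) + κ * t)

/-!
Write `a = ⟨ξ⟩`, `b = √a` and `d = b + κt`, so that `L = 1 + κa/d`. Then `∂ₜL = -κ²a/d²`, whence
`-∂ₜL/L = κ²a/(d(d + κa))`; with `a = b²` the upper bound becomes, after clearing denominators,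
`b² + 2κbt + κ²b²t ≥ 0`. In `ξ`, `∂_ξL = κξ/(ad) - κξ/(2bd²)`, and each term is at most `1` in size
because `κ ≤ 1`, `|ξ| ≤ a = b²` and `1 ≤ b ≤ d`.
-/

open Real

lemma one_le_sqrt_one_add_sq (ξ : ℝ) : 1 ≤ √(1 + ξ ^ 2) :=
  one_le_sqrt.2 (le_add_of_nonneg_right (sq_nonneg ξ))

lemma one_le_sqrt_sqrt_one_add_sq (ξ : ℝ) : 1 ≤ √√(1 + ξ ^ 2) :=
  one_le_sqrt.2 (one_le_sqrt_one_add_sq ξ)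

lemma abs_le_sqrt_one_add_sq (ξ : ℝ) : |ξ| ≤ √(1 + ξ ^ 2) :=
  abs_le_sqrt (le_add_of_nonneg_left zero_le_one)

lemma hasDerivAt_sqrt_one_add_sq (ξ : ℝ) :
    HasDerivAt (fun x => √(1 + x ^ 2)) (ξ / √(1 + ξ ^ 2)) ξ := by
  have h := ((hasDerivAt_pow 2 ξ).const_add 1).sqrt (by positivity)
  convert h using 1
  have : √(1 + ξ ^ 2) ≠ 0 := by positivity
  field_simp
  ring

lemma hasDerivAt_sqrt_sqrt_one_add_sq (ξ : ℝ) :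
    HasDerivAt (fun x => √√(1 + x ^ 2)) (ξ / (2 * √(1 + ξ ^ 2) * √√(1 + ξ ^ 2))) ξ := by
  have h := (hasDerivAt_sqrt_one_add_sq ξ).sqrt (by positivity)
  convert h using 1
  ring

lemma rpow_three_halves_eq_sqrt_pow_three {x : ℝ} (hx : 0 ≤ x) : x ^ ((3 : ℝ) / 2) = √x ^ 3 := by
  rw [rpow_div_two_eq_sqrt _ hx]
  exact_mod_cast rpow_natCast (√x) 3

lemma abs_sub_div_le_two {κ ξ a b d : ℝ} (hκ : 0 ≤ κ) (hκ1 : κ ≤ 1) (hξ : |ξ| ≤ a) (hab : a = b ^ 2)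
    (hb : 1 ≤ b) (hbd : b ≤ d) :
    |κ * ξ / (a * d) - κ * ξ / (2 * b * d ^ 2)| ≤ 2 := by
  have ha : 0 < a := by rw [hab]; positivity
  have hd : 1 ≤ d := hb.trans hbd
  have h1 : |κ * ξ / (a * d)| ≤ 1 := by
    rw [abs_div, abs_mul, abs_of_nonneg hκ, abs_of_pos (show 0 < a * d by positivity),
      div_le_one (by positivity)]
    nlinarith [abs_nonneg ξ]
  have h2 : |κ * ξ / (2 * b * d ^ 2)| ≤ 1 := by
    rw [abs_div, abs_mul, abs_of_nonneg hκ, abs_of_pos (show 0 < 2 * b * d ^ 2 by positivity),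
      div_le_one (by positivity)]
    nlinarith [abs_nonneg ξ, mul_le_mul hbd hbd (by linarith) (by linarith)]
  linarith [abs_sub (κ * ξ / (a * d)) (κ * ξ / (2 * b * d ^ 2))]

lemma sq_mul_div_le_mul_div_cube_add {κ t a b : ℝ} (hκ : 0 ≤ κ) (ht : 0 ≤ t) (hb : 0 < b)
    (hab : a = b ^ 2) :
    κ ^ 2 * a / ((b + κ * t) * (b + κ * t + κ * a)) ≤ κ * a / (b ^ 3 + κ * t ^ 2) := by
  subst hab
  rw [div_le_div_iff₀ (by positivity) (by positivity)]
  have : 0 ≤ κ * b ^ 2 * (b ^ 2 + 2 * b * κ * t + κ ^ 2 * b ^ 2 * t) := by positivity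
  -- this is the right side minus the left side
  nlinarith

section
variable {κ t : ℝ} (ξ : ℝ)

lemma one_le_Lkappa (hκ : 0 ≤ κ) (ht : 0 ≤ t) : 1 ≤ Lkappa κ t ξ := by
  unfold Lkappa
  have := one_le_sqrt_sqrt_one_add_sq ξ
  have : 0 ≤ κ * √(1 + ξ ^ 2) / (√√(1 + ξ ^ 2) + κ * t) := by positivity
  linarith

lemma hasDerivAt_Lkappa_time (hκ : 0 ≤ κ) (ht : 0 ≤ t) :
    HasDerivAt (fun s => Lkappa κ s ξ)
      (-(κ ^ 2 * √(1 + ξ ^ 2) / (√√(1 + ξ ^ 2) + κ * t) ^ 2)) t := by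
  have hd : 0 < √√(1 + ξ ^ 2) + κ * t := by
    have := one_le_sqrt_sqrt_one_add_sq ξ; positivity
  have h := ((hasDerivAt_const t (κ * √(1 + ξ ^ 2))).div
    (((hasDerivAt_id t).const_mul κ).const_add (√√(1 + ξ ^ 2))) hd.ne').const_add 1
  refine h.congr_deriv ?_
  simp only [id]
  field_simp
  ring

lemma hasDerivAt_Lkappa_space (hκ : 0 ≤ κ) (ht : 0 ≤ t) :
    HasDerivAt (fun x => Lkappa κ t x)
      (κ * ξ / (√(1 + ξ ^ 2) * (√√(1 + ξ ^ 2) + κ * t))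
        - κ * ξ / (2 * √√(1 + ξ ^ 2) * (√√(1 + ξ ^ 2) + κ * t) ^ 2)) ξ := by
  have hd : 0 < √√(1 + ξ ^ 2) + κ * t := by
    have := one_le_sqrt_sqrt_one_add_sq ξ; positivity
  have h := (((hasDerivAt_sqrt_one_add_sq ξ).const_mul κ).div
    ((hasDerivAt_sqrt_sqrt_one_add_sq ξ).add_const (κ * t)) hd.ne').const_add 1
  refine h.congr_deriv ?_
  have : √(1 + ξ ^ 2) ≠ 0 := by positivity
  have : √√(1 + ξ ^ 2) ≠ 0 := by positivity
  field_simp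

lemma abs_deriv_Lkappa_space_le (hκ : 0 ≤ κ) (hκ1 : κ ≤ 1) (ht : 0 ≤ t) :
    |deriv (fun x => Lkappa κ t x) ξ| ≤ 2 := by
  rw [(hasDerivAt_Lkappa_space ξ hκ ht).deriv]
  exact abs_sub_div_le_two hκ hκ1 (abs_le_sqrt_one_add_sq ξ) (sq_sqrt (sqrt_nonneg _)).symm
    (one_le_sqrt_sqrt_one_add_sq ξ) (le_add_of_nonneg_right (by positivity))

lemma neg_deriv_time_div_Lkappa (hκ : 0 ≤ κ) (ht : 0 ≤ t) :
    -(deriv (fun s => Lkappa κ s ξ) t) / Lkappa κ t ξ =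
      κ ^ 2 * √(1 + ξ ^ 2) /
        ((√√(1 + ξ ^ 2) + κ * t) * (√√(1 + ξ ^ 2) + κ * t + κ * √(1 + ξ ^ 2))) := by
  have hd : 0 < √√(1 + ξ ^ 2) + κ * t := by
    have := one_le_sqrt_sqrt_one_add_sq ξ; positivity
  rw [(hasDerivAt_Lkappa_time ξ hκ ht).deriv, Lkappa]
  field_simp

end

theorem stmt_17 :
    ∃ C : ℝ, 0 < C ∧
      ∀ (κ t ξ : ℝ), κ ∈ Set.Ioc (0:ℝ) 1 → 0 ≤ t →
        1 ≤ Lkappa κ t ξ ∧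
        |deriv (fun x => Lkappa κ t x) ξ| ≤ C ∧
        -(deriv (fun s => Lkappa κ s ξ) t) / Lkappa κ t ξ =
          κ ^ 2 * Real.sqrt (1 + ξ ^ 2) /
            ((Real.sqrt (Real.sqrt (1 + ξ ^ 2)) + κ * t) *
              (Real.sqrt (Real.sqrt (1 + ξ ^ 2)) + κ * t + κ * Real.sqrt (1 + ξ ^ 2))) ∧
        -(deriv (fun s => Lkappa κ s ξ) t) / Lkappa κ t ξ ≤
          κ * Real.sqrt (1 + ξ ^ 2) / (Real.sqrt (1 + ξ ^ 2) ^ ((3:ℝ)/2) + κ * t ^ 2) := by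
  refine ⟨2, two_pos, fun κ t ξ ⟨hκ, hκ1⟩ ht => ?_⟩
  have hlog := neg_deriv_time_div_Lkappa ξ hκ.le ht
  refine ⟨one_le_Lkappa ξ hκ.le ht, abs_deriv_Lkappa_space_le ξ hκ.le hκ1 ht, hlog, ?_⟩
  rw [hlog, rpow_three_halves_eq_sqrt_pow_three (sqrt_nonneg _)]
  exact sq_mul_div_le_mul_div_cube_add hκ.le ht (by positivity) (sq_sqrt (sqrt_nonneg _)).symm
end
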